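/- arXiv:1707.03603 — 2 statements merged into one kernel-verified Lean document; each statement's English description precedes it below -/
import Mathlib

section
/- Let $N \in \mathbb{N}$ with $N \geq 1$, let $y \in \mathbb{R}^N$ with $|y| > 1$, and define $p : B \to \mathbb{R}$ on the open unit ball $B \subset \mathbb{R}^N$ by $p(x) = |x - y|^{-N} \left(1 + \frac{1 - |x|^2}{|y|^2 - 1}\right)$. Then $p$ is harmonic in $B$, i.e., $\Delta p(x) = 0$ for all $x \in B$. -/
/-!
On the line `t ↦ x + t • e` through `x` in a unit direction `e`, the function is
`q(t) ^ (-N/2) * r(t)` for two quadratic polynomials `q, r`, so its second derivative at `0` is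
explicit. Summing over an orthonormal basis, Parseval turns `⟪x - y, e⟫ ^ 2` and
`⟪x - y, e⟫ * ⟪x, e⟫` into `‖x - y‖ ^ 2` and `⟪x - y, x⟫`. The sum then vanishes exactly because
the constant in the second factor is `‖y‖ ^ 2 - 1 = ‖x‖ ^ 2 - 2 ⟪x - y, x⟫ + ‖x - y‖ ^ 2 - 1`.
-/

open Real Metric

/-- The Laplacian of `f : ℝ^N → ℝ` at `x`, defined as the sum of second derivatives
along the coordinate directions. -/
noncomputable def laplacian {N : ℕ} (f : EuclideanSpace ℝ (Fin N) → ℝ)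
    (x : EuclideanSpace ℝ (Fin N)) : ℝ :=
  ∑ i : Fin N, iteratedDeriv 2 (fun t : ℝ => f (x + t • EuclideanSpace.single i (1 : ℝ))) 0

open Filter Topology
open scoped RealInnerProductSpace

theorem iteratedDeriv_two_eq_of_hasDerivAt {f f' : ℝ → ℝ} {f'' x : ℝ}
    (hf : ∀ᶠ t in 𝓝 x, HasDerivAt f (f' t) t) (hf' : HasDerivAt f' f'' x) :
    iteratedDeriv 2 f x = f'' := by
  have hderiv : deriv f =ᶠ[𝓝 x] f' := hf.mono fun t ht => ht.deriv
  rw [iteratedDeriv_succ, iteratedDeriv_one, hderiv.deriv_eq, hf'.deriv]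

theorem iteratedDeriv_two_mul_of_hasDerivAt {f g f' g' : ℝ → ℝ} {f'' g'' x : ℝ}
    (hf : ∀ᶠ t in 𝓝 x, HasDerivAt f (f' t) t) (hg : ∀ᶠ t in 𝓝 x, HasDerivAt g (g' t) t)
    (hf' : HasDerivAt f' f'' x) (hg' : HasDerivAt g' g'' x) :
    iteratedDeriv 2 (fun t => f t * g t) x = f'' * g x + 2 * (f' x * g' x) + f x * g'' := by
  rw [iteratedDeriv_two_eq_of_hasDerivAt ((hf.and hg).mono fun t h => h.1.fun_mul h.2)
    ((hf'.fun_mul hg.self_of_nhds).fun_add (hf.self_of_nhds.fun_mul hg'))]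
  ring

theorem hasDerivAt_monicQuadratic (a b t : ℝ) :
    HasDerivAt (fun t => a + b * t + t ^ 2) (b + 2 * t) t := by
  simpa using (((hasDerivAt_id t).const_mul b).const_add a).fun_add (hasDerivAt_pow 2 t)

theorem iteratedDeriv_two_rpow_monicQuadratic_mul {a : ℝ} (ha : 0 < a) (b α : ℝ)
    {r r' : ℝ → ℝ} {r'' : ℝ} (hr : ∀ t, HasDerivAt r (r' t) t) (hr' : HasDerivAt r' r'' 0) :
    iteratedDeriv 2 (fun t => (a + b * t + t ^ 2) ^ α * r t) 0 =
      (α * (α - 1) * a ^ (α - 2) * b ^ 2 + 2 * α * a ^ (α - 1)) * r 0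
        + 2 * (α * b * a ^ (α - 1) * r' 0) + a ^ α * r'' := by
  have hq := hasDerivAt_monicQuadratic a b
  have hpos : ∀ᶠ t in 𝓝 0, 0 < a + b * t + t ^ 2 :=
    continuousAt_const.eventually_lt (hq 0).continuousAt (by simpa using ha)
  have hq' : HasDerivAt (fun t => (b + 2 * t) * α * (a + b * t + t ^ 2) ^ (α - 1))
      (2 * α * a ^ (α - 1) + b * α * (b * (α - 1) * a ^ (α - 2))) 0 := by
    have hlin : HasDerivAt (fun t : ℝ => (b + 2 * t) * α) (2 * α) 0 := by
      simpa using (((hasDerivAt_id (0 : ℝ)).const_mul 2).const_add b).mul_const α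
    have hpow := (hq 0).rpow_const (p := α - 1) (Or.inl (by simpa using ha.ne'))
    refine (hlin.fun_mul hpow).congr_deriv ?_
    norm_num [show α - 1 - 1 = α - 2 by ring]
  rw [iteratedDeriv_two_mul_of_hasDerivAt
    (hpos.mono fun t ht => (hq t).rpow_const (Or.inl ht.ne')) (.of_forall hr) hq' hr']
  norm_num
  ring

theorem inv_pow_eq_sq_rpow_neg_half {r : ℝ} (hr : 0 ≤ r) (N : ℕ) :
    (r ^ N)⁻¹ = (r ^ 2) ^ (-(N : ℝ) / 2) := by
  rw [← Real.rpow_natCast _ 2, ← Real.rpow_mul hr, ← Real.rpow_natCast _ N, ← Real.rpow_neg hr]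
  congr 1
  push_cast
  ring

section InnerProductSpace

variable {E : Type*} [NormedAddCommGroup E] [InnerProductSpace ℝ E]

theorem norm_add_smul_sq_of_norm_eq_one {v e : E} (he : ‖e‖ = 1) (t : ℝ) :
    ‖v + t • e‖ ^ 2 = ‖v‖ ^ 2 + 2 * ⟪v, e⟫ * t + t ^ 2 := by
  rw [norm_add_sq_real, inner_smul_right, norm_smul, he, Real.norm_eq_abs, mul_one, sq_abs]
  ring

theorem iteratedDeriv_two_poissonKernel_comp_line {x y e : E} (hxy : x ≠ y) (he : ‖e‖ = 1)
    (N : ℕ) (k : ℝ) :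
    iteratedDeriv 2 (fun t : ℝ => (‖x + t • e - y‖ ^ N)⁻¹ * (1 + (1 - ‖x + t • e‖ ^ 2) / k)) 0 =
      (‖x - y‖ ^ 2) ^ (-(N : ℝ) / 2 - 2) *
        (N * (N + 2) * (1 + (1 - ‖x‖ ^ 2) / k) * ⟪x - y, e⟫ ^ 2
          + 4 * N * ‖x - y‖ ^ 2 / k * (⟪x - y, e⟫ * ⟪x, e⟫)
          - (N * ‖x - y‖ ^ 2 * (1 + (1 - ‖x‖ ^ 2) / k) + 2 * ‖x - y‖ ^ 4 / k)) := by
  have hv : ‖x - y‖ ≠ 0 := norm_ne_zero_iff.mpr (sub_ne_zero.mpr hxy)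
  have ha : 0 < ‖x - y‖ ^ 2 := by positivity
  have hline : (fun t : ℝ => (‖x + t • e - y‖ ^ N)⁻¹ * (1 + (1 - ‖x + t • e‖ ^ 2) / k)) =
      fun t => (‖x - y‖ ^ 2 + 2 * ⟪x - y, e⟫ * t + t ^ 2) ^ (-(N : ℝ) / 2) *
        (1 + (1 - (‖x‖ ^ 2 + 2 * ⟪x, e⟫ * t + t ^ 2)) / k) := by
    ext t
    rw [add_sub_right_comm, inv_pow_eq_sq_rpow_neg_half (norm_nonneg _),
      norm_add_smul_sq_of_norm_eq_one he, norm_add_smul_sq_of_norm_eq_one he]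
  have hr (t : ℝ) : HasDerivAt (fun t => 1 + (1 - (‖x‖ ^ 2 + 2 * ⟪x, e⟫ * t + t ^ 2)) / k)
      (-(2 * ⟪x, e⟫ + 2 * t) / k) t := by
    simpa [neg_div] using (((hasDerivAt_monicQuadratic _ _ t).const_sub 1).div_const k).const_add 1
  have hr' : HasDerivAt (fun t : ℝ => -(2 * ⟪x, e⟫ + 2 * t) / k) (-2 / k) 0 := by
    simpa using ((((hasDerivAt_id (0 : ℝ)).const_mul 2).const_add (2 * ⟪x, e⟫)).neg).div_const k
  rw [hline, iteratedDeriv_two_rpow_monicQuadratic_mul ha _ _ hr hr']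
  simp only [Real.rpow_sub ha, Real.rpow_one, Real.rpow_two]
  field_simp
  ring

theorem sum_iteratedDeriv_two_poissonKernel_comp_line_eq_zero {ι : Type*} [Fintype ι]
    (b : OrthonormalBasis ι ℝ E) {x y : E} (hxy : x ≠ y) (hy : ‖y‖ ≠ 1) :
    ∑ i, iteratedDeriv 2 (fun t : ℝ => (‖x + t • b i - y‖ ^ Fintype.card ι)⁻¹ *
      (1 + (1 - ‖x + t • b i‖ ^ 2) / (‖y‖ ^ 2 - 1))) 0 = 0 := by
  have hk : ‖y‖ ^ 2 - 1 ≠ 0 := by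
    rwa [sub_ne_zero, Ne, pow_eq_one_iff_of_nonneg (norm_nonneg y) two_ne_zero]
  have hsq : ∑ i, ⟪x - y, b i⟫ ^ 2 = ‖x - y‖ ^ 2 := b.sum_sq_inner_left (x - y)
  have hmul : ∑ i, ⟪x - y, b i⟫ * ⟪x, b i⟫ = ⟪x - y, x⟫ := by
    simpa only [real_inner_comm x] using b.sum_inner_mul_inner (x - y) x
  simp only [iteratedDeriv_two_poissonKernel_comp_line hxy (b.orthonormal.1 _), ← Finset.mul_sum,
    Finset.sum_sub_distrib, Finset.sum_add_distrib, hsq, hmul, Finset.sum_const,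
    Finset.card_univ, nsmul_eq_mul]
  apply mul_eq_zero_of_right
  have hy2 : ‖y‖ ^ 2 = ‖x‖ ^ 2 - 2 * ⟪x - y, x⟫ + ‖x - y‖ ^ 2 := by
    simpa [real_inner_comm] using norm_sub_sq_real x (x - y)
  rw [hy2] at hk ⊢
  field_simp
  ring

end InnerProductSpace

theorem p_is_harmonic_general (N : ℕ) (y : EuclideanSpace ℝ (Fin N)) (hy : 1 < ‖y‖)
    (x : EuclideanSpace ℝ (Fin N)) (hx : x ∈ ball (0 : EuclideanSpace ℝ (Fin N)) 1) :
    laplacian (fun z => (‖z - y‖ ^ N)⁻¹ * (1 + (1 - ‖z‖ ^ 2) / (‖y‖ ^ 2 - 1))) x = 0 := by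
  have hxy : x ≠ y := by
    rintro rfl
    exact hy.not_gt (by simpa using hx)
  simpa [laplacian] using sum_iteratedDeriv_two_poissonKernel_comp_line_eq_zero
    (EuclideanSpace.basisFun (Fin N) ℝ) hxy hy.ne'

/-- The function `p(x) = |x-y|^{-N} (1 + (1-|x|²)/(|y|²-1))` is harmonic in the
open unit ball, for any fixed `y` with `|y| > 1`. -/
theorem p_is_harmonic (N : ℕ) (hN : 1 ≤ N) (y : EuclideanSpace ℝ (Fin N)) (hy : 1 < ‖y‖)
    (x : EuclideanSpace ℝ (Fin N)) (hx : x ∈ ball (0 : EuclideanSpace ℝ (Fin N)) 1) :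
    laplacian (fun z => (‖z - y‖ ^ N)⁻¹ * (1 + (1 - ‖z‖ ^ 2) / (‖y‖ ^ 2 - 1))) x = 0 :=
  p_is_harmonic_general N y hy x hx
end

section
/- Let $N \in \mathbb{N}$, $s > 0$, $z \in \partial B$ (i.e., $|z| = 1$), and $x \in B$ with $x \neq z$. Define the Green function $G_s(x,y) = k_{N,s}|x-y|^{2s-N}\int_0^{\rho(x,y)} \frac{t^{s-1}}{(t+1)^{N/2}}\,dt$ with $\rho(x,y) = (1-|x|^2)(1-|y|^2)|x-y|^{-2}$ and $k_{N,s} > 0$ a constant. Then $\lim_{B \ni y \to z} \frac{G_s(x,y)}{(1-|y|^2)^s} = \frac{k_{N,s}}{s} \cdot \frac{(1-|x|^2)^s}{|x-z|^N}$. -/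
/-!
Put `ρ(y) = (1 - |x|²)(1 - |y|²)/|x - y|²` and `F(ρ) = ∫₀^ρ t^(s-1) (t+1)^(-N/2) dt`. Then
`G_s(x,y)/(1 - |y|²)^s = k (1 - |x|²)^s |x - y|^(-N) · F(ρ)/ρ^s`, and `ρ(y) → 0⁺` as `y → z`.
Squeezing the weight `(t+1)^(-N/2)` between `(1+ρ)^(-N/2)` and `1` compares `F(ρ)` with
`∫₀^ρ t^(s-1) dt = ρ^s/s`, so `F(ρ)/ρ^s → 1/s`.
-/

open Real Metric Filter MeasureTheory Set intervalIntegral Topology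

noncomputable def boggioIntegral (s c ρ : ℝ) : ℝ :=
  ∫ t in (0 : ℝ)..ρ, t ^ (s - 1) / (t + 1) ^ c

section BoggioIntegral

variable {s c : ℝ}

lemma integral_rpow_sub_one_of_pos (hs : 0 < s) (ρ : ℝ) :
    ∫ t in (0 : ℝ)..ρ, t ^ (s - 1) = ρ ^ s / s := by
  rw [integral_rpow (Or.inl (by linarith)), sub_add_cancel, zero_rpow hs.ne', sub_zero]

lemma intervalIntegrable_rpow_sub_one_div_add_one_rpow (hs : 0 < s) {ρ : ℝ} (hρ : 0 ≤ ρ) :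
    IntervalIntegrable (fun t => t ^ (s - 1) / (t + 1) ^ c) volume 0 ρ := by
  simp_rw [div_eq_mul_inv]
  refine (intervalIntegrable_rpow' (by linarith)).mul_continuousOn ?_
  rw [uIcc_of_le hρ]
  exact ContinuousOn.inv₀ (fun t ht => ((continuous_add_const 1).continuousAt.rpow_const
    (Or.inl (by linarith [ht.1]))).continuousWithinAt)
    fun t ht => (rpow_pos_of_pos (by linarith [ht.1]) c).ne'

lemma boggioIntegral_le (hs : 0 < s) (hc : 0 ≤ c) {ρ : ℝ} (hρ : 0 ≤ ρ) :
    boggioIntegral s c ρ ≤ ρ ^ s / s := by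
  rw [boggioIntegral, ← integral_rpow_sub_one_of_pos hs]
  refine integral_mono_on hρ (intervalIntegrable_rpow_sub_one_div_add_one_rpow hs hρ)
    (intervalIntegrable_rpow' (by linarith)) fun t ht => ?_
  exact div_le_self (rpow_nonneg ht.1 _) (one_le_rpow (by linarith [ht.1]) hc)

lemma one_add_rpow_neg_mul_le_boggioIntegral (hs : 0 < s) (hc : 0 ≤ c) {ρ : ℝ} (hρ : 0 ≤ ρ) :
    (1 + ρ) ^ (-c) * (ρ ^ s / s) ≤ boggioIntegral s c ρ := by
  rw [boggioIntegral, ← integral_rpow_sub_one_of_pos hs, ← intervalIntegral.integral_const_mul]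
  refine integral_mono_on hρ ((intervalIntegrable_rpow' (by linarith)).const_mul _)
    (intervalIntegrable_rpow_sub_one_div_add_one_rpow hs hρ) fun t ht => ?_
  rw [rpow_neg (by linarith), inv_mul_eq_div]
  exact div_le_div_of_nonneg_left (rpow_nonneg ht.1 _) (rpow_pos_of_pos (by linarith [ht.1]) _)
    (rpow_le_rpow (by linarith [ht.1]) (by linarith [ht.2]) hc)

theorem tendsto_boggioIntegral_div_rpow (hs : 0 < s) (hc : 0 ≤ c) :
    Tendsto (fun ρ => boggioIntegral s c ρ / ρ ^ s) (𝓝[>] 0) (𝓝 (1 / s)) := by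
  have hlower : Tendsto (fun ρ : ℝ => (1 + ρ) ^ (-c) / s) (𝓝[>] 0) (𝓝 (1 / s)) := by
    have h : ContinuousAt (fun ρ : ℝ => (1 + ρ) ^ (-c) / s) 0 :=
      ((continuous_const_add 1).continuousAt.rpow_const (Or.inl (by norm_num))).div_const s
    simpa using h.tendsto.mono_left nhdsWithin_le_nhds
  refine tendsto_of_tendsto_of_tendsto_of_le_of_le' hlower tendsto_const_nhds ?_ ?_ <;>
    filter_upwards [self_mem_nhdsWithin] with ρ (hρ : 0 < ρ)
  · rw [le_div_iff₀ (rpow_pos_of_pos hρ s)]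
    calc (1 + ρ) ^ (-c) / s * ρ ^ s = (1 + ρ) ^ (-c) * (ρ ^ s / s) := by ring
      _ ≤ _ := one_add_rpow_neg_mul_le_boggioIntegral hs hc hρ.le
  · rw [div_le_iff₀ (rpow_pos_of_pos hρ s)]
    calc _ ≤ ρ ^ s / s := boggioIntegral_le hs hc hρ.le
      _ = 1 / s * ρ ^ s := by ring

end BoggioIntegral

lemma rpow_two_mul_sub_mul_div_rpow {p q d : ℝ} (hp : 0 < p) (hq : 0 < q) (hd : 0 < d)
    (s n I : ℝ) :
    d ^ (2 * s - n) * I / q ^ s = p ^ s * d ^ (-n) * (I / (p * q / d ^ 2) ^ s) := by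
  have hρ : (p * q / d ^ 2) ^ s = p ^ s * q ^ s / d ^ (2 * s) := by
    rw [div_rpow (by positivity) (by positivity), mul_rpow hp.le hq.le, ← rpow_natCast,
      ← rpow_mul hd.le, Nat.cast_ofNat]
  have := rpow_pos_of_pos hp s
  have := rpow_pos_of_pos hq s
  rw [hρ, rpow_sub hd, rpow_neg hd.le]
  field_simp

lemma tendsto_one_sub_norm_sq_nhdsWithin_ball {E : Type*} [SeminormedAddCommGroup E] {z : E}
    (hz : ‖z‖ = 1) : Tendsto (fun y => 1 - ‖y‖ ^ 2) (𝓝[ball 0 1] z) (𝓝[>] 0) := by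
  refine tendsto_nhdsWithin_iff.mpr ⟨?_, ?_⟩
  · have h : Continuous fun y : E => 1 - ‖y‖ ^ 2 := by fun_prop
    exact (h.tendsto' z 0 (by simp [hz])).mono_left nhdsWithin_le_nhds
  · filter_upwards [self_mem_nhdsWithin] with y hy
    have := mem_ball_zero_iff.mp hy
    simp only [mem_Ioi, sub_pos]
    nlinarith [norm_nonneg y]

theorem martin_kernel_limit_general (N : ℕ) (s : ℝ) (hs : 0 < s) (kNs : ℝ)
    (z : EuclideanSpace ℝ (Fin N)) (hz : ‖z‖ = 1)
    (x : EuclideanSpace ℝ (Fin N)) (hx : x ∈ ball (0 : EuclideanSpace ℝ (Fin N)) 1)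
    (hxz : x ≠ z)
    (G : EuclideanSpace ℝ (Fin N) → EuclideanSpace ℝ (Fin N) → ℝ)
    (hG : ∀ a b : EuclideanSpace ℝ (Fin N), a ≠ b →
      G a b = kNs * ‖a - b‖ ^ (2 * s - N) *
        ∫ t in (0 : ℝ)..((1 - ‖a‖ ^ 2) * (1 - ‖b‖ ^ 2) / ‖a - b‖ ^ 2),
          t ^ (s - 1) / (t + 1) ^ ((N : ℝ) / 2)) :
    Tendsto (fun y => G x y / (1 - ‖y‖ ^ 2) ^ s)
      (nhdsWithin z (ball (0 : EuclideanSpace ℝ (Fin N)) 1))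
      (nhds (kNs / s * ((1 - ‖x‖ ^ 2) ^ s / ‖x - z‖ ^ N))) := by
  have hp : 0 < 1 - ‖x‖ ^ 2 := by
    have := mem_ball_zero_iff.mp hx
    nlinarith [norm_nonneg x]
  have hd : 0 < ‖x - z‖ := norm_pos_iff.mpr (sub_ne_zero.mpr hxz)
  have hq := tendsto_nhdsWithin_iff.mp (tendsto_one_sub_norm_sq_nhdsWithin_ball hz)
  have hdist : Tendsto (fun y => ‖x - y‖) (𝓝[ball 0 1] z) (𝓝 ‖x - z‖) :=
    ((continuous_const.sub continuous_id).norm.tendsto z).mono_left nhdsWithin_le_nhds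
  have hdist_pos : ∀ᶠ y in 𝓝[ball 0 1] z, 0 < ‖x - y‖ := hdist.eventually (eventually_gt_nhds hd)
  have hρ : Tendsto (fun y => (1 - ‖x‖ ^ 2) * (1 - ‖y‖ ^ 2) / ‖x - y‖ ^ 2) (𝓝[ball 0 1] z)
      (𝓝[>] 0) := by
    refine tendsto_nhdsWithin_iff.mpr ⟨?_, ?_⟩
    · have h := (hq.1.const_mul (1 - ‖x‖ ^ 2)).div (hdist.pow 2) (by positivity)
      rwa [mul_zero, zero_div] at h
    · filter_upwards [hq.2, hdist_pos] with y (hqy : 0 < 1 - ‖y‖ ^ 2) hdy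
      exact div_pos (mul_pos hp hqy) (pow_pos hdy 2)
  have hlim := (((hdist.rpow_const (p := -N) (Or.inl hd.ne')).const_mul ((1 - ‖x‖ ^ 2) ^ s)).mul
    ((tendsto_boggioIntegral_div_rpow hs (c := (N : ℝ) / 2) (by positivity)).comp hρ)).const_mul kNs
  convert hlim.congr' ?_ using 2
  · rw [rpow_neg hd.le, rpow_natCast]
    ring
  · filter_upwards [hq.2, hdist_pos] with y (hqy : 0 < 1 - ‖y‖ ^ 2) hdy
    rw [Function.comp_apply, boggioIntegral, ← rpow_two_mul_sub_mul_div_rpow hp hqy hdy,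
      hG x y (sub_ne_zero.mp (norm_pos_iff.mp hdy))]
    ring

/-- The Martin kernel limit: for the Boggio Green function `G_s`,
`lim_{B ∋ y → z} G_s(x,y)/(1-|y|²)^s = (k_{N,s}/s) (1-|x|²)^s/|x-z|^N`
for `x ∈ B` and `z ∈ ∂B`. -/
theorem martin_kernel_limit (N : ℕ) (hN : 1 ≤ N) (s : ℝ) (hs : 0 < s) (kNs : ℝ)
    (hk : 0 < kNs) (z : EuclideanSpace ℝ (Fin N)) (hz : ‖z‖ = 1)
    (x : EuclideanSpace ℝ (Fin N)) (hx : x ∈ ball (0 : EuclideanSpace ℝ (Fin N)) 1)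
    (hxz : x ≠ z)
    (G : EuclideanSpace ℝ (Fin N) → EuclideanSpace ℝ (Fin N) → ℝ)
    (hG : ∀ a b : EuclideanSpace ℝ (Fin N), a ≠ b →
      G a b = kNs * ‖a - b‖ ^ (2 * s - N) *
        ∫ t in (0 : ℝ)..((1 - ‖a‖ ^ 2) * (1 - ‖b‖ ^ 2) / ‖a - b‖ ^ 2),
          t ^ (s - 1) / (t + 1) ^ ((N : ℝ) / 2)) :
    Tendsto (fun y => G x y / (1 - ‖y‖ ^ 2) ^ s)
      (nhdsWithin z (ball (0 : EuclideanSpace ℝ (Fin N)) 1))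
      (nhds (kNs / s * ((1 - ‖x‖ ^ 2) ^ s / ‖x - z‖ ^ N))) :=
  martin_kernel_limit_general N s hs kNs z hz x hx hxz G hG
end
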